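/- arXiv:2502.06683 — 2 statements merged into one kernel-verified Lean document; each statement's English description precedes it below -/
import Mathlib

section
/- The zero matrix is a minimizer of the group-lasso problem min_W (1/(2T))‖Θ − WΘ‖_F² + λ·Σ_p ‖w_p‖₂ (where w_p is the p-th column of W and Θ is a P×T data matrix) if and only if λ ≥ max_p ‖c_p‖₂, where c_p is the p-th column of the covariance matrix C = (1/T)ΘΘᵀ. -/
/-!
Expanding the square, `F W - F 0 = (1/(2T)) ∑ ((W Θ) i t)² - ∑ W i p C i p + λ ∑ ‖w_p‖`. The
quadratic term is of second order under `W ↦ ε W` while the other two are of first order, so `0`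
is a minimizer iff `∑ W i p C i p ≤ λ ∑ ‖w_p‖` for every `W`. Column by column this is
Cauchy–Schwarz when every `‖c_p‖ ≤ λ`, and testing it on the matrix whose only nonzero column is
`c_p` gives `‖c_p‖² ≤ λ ‖c_p‖`.
-/

open Matrix Finset

theorem forall_le_add_iff_of_homogeneous {E : Type*} [SMul ℝ E] {L N Q : E → ℝ}
    (hL : ∀ (ε : ℝ) x, 0 < ε → L (ε • x) = ε * L x)
    (hN : ∀ (ε : ℝ) x, 0 < ε → N (ε • x) = ε * N x)
    (hQ : ∀ (ε : ℝ) x, Q (ε • x) = ε ^ 2 * Q x) (hQ_nonneg : ∀ x, 0 ≤ Q x) :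
    (∀ x, L x ≤ Q x + N x) ↔ ∀ x, L x ≤ N x := by
  refine ⟨fun h x => le_of_forall_pos_le_add fun δ hδ => ?_,
    fun h x => (h x).trans (le_add_of_nonneg_left (hQ_nonneg x))⟩
  set ε := δ / (Q x + 1)
  have hε : 0 < ε := div_pos hδ (by linarith [hQ_nonneg x])
  have hεQ : ε * Q x ≤ δ := by
    rw [div_mul_eq_mul_div, div_le_iff₀ (by linarith [hQ_nonneg x])]
    nlinarith [hQ_nonneg x]
  have hscaled : ε * L x ≤ ε * (ε * Q x + N x) := by
    have := h (ε • x)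
    rw [hL ε x hε, hN ε x hε, hQ] at this
    linarith
  linarith [le_of_mul_le_mul_left hscaled hε]

variable {m n : Type*} [Fintype m]

theorem sum_sq_sub_mul_apply [Fintype n] (Θ : Matrix m n ℝ) (W : Matrix m m ℝ) :
    ∑ i, ∑ t, ((Θ - W * Θ) i t) ^ 2 =
      ∑ i, ∑ t, Θ i t ^ 2 - 2 * ∑ p, ∑ i, W i p * (Θ * Θᵀ) i p + ∑ i, ∑ t, (W * Θ) i t ^ 2 := by
  have hcross : ∑ i, ∑ t, Θ i t * (W * Θ) i t = ∑ p, ∑ i, W i p * (Θ * Θᵀ) i p := by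
    simp only [mul_apply, transpose_apply, mul_sum]
    refine (sum_congr rfl fun i _ => sum_comm).trans (sum_comm.trans ?_)
    refine sum_congr rfl fun p _ => sum_congr rfl fun i _ => sum_congr rfl fun t _ => ?_
    ring
  simp only [Matrix.sub_apply, sub_sq, sum_add_distrib, sum_sub_distrib, ← hcross, mul_sum,
    mul_assoc]

theorem sum_sq_smul_mul_apply {l : Type*} [Fintype l] [Fintype n] (ε : ℝ) (W : Matrix l m ℝ)
    (Θ : Matrix m n ℝ) :
    ∑ i, ∑ t, ((ε • W) * Θ) i t ^ 2 = ε ^ 2 * ∑ i, ∑ t, (W * Θ) i t ^ 2 := by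
  simp only [Matrix.smul_mul, Matrix.smul_apply, smul_eq_mul, mul_pow, mul_sum]

noncomputable def colNorm (A : Matrix m n ℝ) (p : n) : ℝ := √(∑ i, A i p ^ 2)

theorem colNorm_smul {ε : ℝ} (hε : 0 ≤ ε) (A : Matrix m n ℝ) (p : n) :
    colNorm (ε • A) p = ε * colNorm A p := by
  simp only [colNorm, Matrix.smul_apply, smul_eq_mul, mul_pow, ← mul_sum,
    Real.sqrt_mul (sq_nonneg ε), Real.sqrt_sq hε]

theorem sum_mul_le_of_colNorm_le [Fintype n] {C : Matrix m n ℝ} {lam : ℝ}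
    (hC : ∀ p, colNorm C p ≤ lam) (W : Matrix m n ℝ) :
    ∑ p, ∑ i, W i p * C i p ≤ lam * ∑ p, colNorm W p := by
  rw [mul_sum]
  refine sum_le_sum fun p _ => ?_
  calc ∑ i, W i p * C i p ≤ colNorm W p * colNorm C p := Real.sum_mul_le_sqrt_mul_sqrt _ _ _
    _ ≤ lam * colNorm W p := by
      rw [mul_comm]; exact mul_le_mul_of_nonneg_right (hC p) (Real.sqrt_nonneg _)

theorem colNorm_le_of_forall_sum_mul_le [Fintype n] [DecidableEq n] {C : Matrix m n ℝ} {lam : ℝ}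
    (hlam : 0 ≤ lam)
    (h : ∀ W : Matrix m n ℝ, ∑ p, ∑ i, W i p * C i p ≤ lam * ∑ p, colNorm W p) (p : n) :
    colNorm C p ≤ lam := by
  set Cp : Matrix m n ℝ := of fun i q => if q = p then C i p else 0
  have hpair : ∑ q, ∑ i, Cp i q * C i q = colNorm C p ^ 2 := by
    rw [colNorm, Real.sq_sqrt (sum_nonneg fun i _ => sq_nonneg _), sum_eq_single p]
    · simp [Cp, sq]
    · intro q _ hq; simp [Cp, hq]
    · simp
  have hnorm : ∑ q, colNorm Cp q = colNorm C p := by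
    rw [sum_eq_single p]
    · simp [Cp, colNorm]
    · intro q _ hq; simp [Cp, colNorm, hq]
    · simp
  have hle := h Cp
  rw [hpair, hnorm] at hle
  nlinarith [Real.sqrt_nonneg (∑ i, C i p ^ 2)]

theorem forall_sum_mul_le_iff_colNorm_le [Fintype n] {C : Matrix m n ℝ} {lam : ℝ}
    (hlam : 0 ≤ lam) :
    (∀ W : Matrix m n ℝ, ∑ p, ∑ i, W i p * C i p ≤ lam * ∑ p, colNorm W p) ↔
      ∀ p, colNorm C p ≤ lam := by
  classical
  exact ⟨colNorm_le_of_forall_sum_mul_le hlam, sum_mul_le_of_colNorm_le⟩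

open Matrix Finset in
theorem groupLasso_zero_minimizer_iff_general
    (P T : ℕ) (hP : 0 < P)
    (Θ : Matrix (Fin P) (Fin T) ℝ) (lam : ℝ) (hlam : 0 < lam)
    (C : Matrix (Fin P) (Fin P) ℝ)
    (hC : C = (1 / (T : ℝ)) • (Θ * Θᵀ))
    (f₁ : Matrix (Fin P) (Fin P) ℝ → ℝ)
    (hf₁ : f₁ = fun W => (1 / (2 * (T : ℝ))) *
      ∑ i : Fin P, ∑ t : Fin T, ((Θ - W * Θ) i t) ^ 2)
    (g : Matrix (Fin P) (Fin P) ℝ → ℝ)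
    (hg : g = fun W => ∑ p : Fin P, Real.sqrt (∑ i : Fin P, (W i p) ^ 2)) :
    (∀ W : Matrix (Fin P) (Fin P) ℝ,
        f₁ 0 + lam * g 0 ≤ f₁ W + lam * g W) ↔
      lam ≥ (univ.sup' (univ_nonempty_iff.mpr ⟨⟨0, hP⟩⟩)
        fun p : Fin P => Real.sqrt (∑ i : Fin P, (C i p) ^ 2)) := by
  set L : Matrix (Fin P) (Fin P) ℝ → ℝ := fun W => ∑ p, ∑ i, W i p * C i p
  set Q : Matrix (Fin P) (Fin P) ℝ → ℝ := fun W => 1 / (2 * (T : ℝ)) * ∑ i, ∑ t, (W * Θ) i t ^ 2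
  replace hg : g = fun W => ∑ p, colNorm W p := hg
  have hexcess : ∀ W, f₁ W + lam * g W - (f₁ 0 + lam * g 0) = Q W + lam * g W - L W := by
    intro W
    have hf₁0 : f₁ 0 = 1 / (2 * (T : ℝ)) * ∑ i, ∑ t, Θ i t ^ 2 := by simp [hf₁]
    have hL : L W = 1 / (T : ℝ) * ∑ p, ∑ i, W i p * (Θ * Θᵀ) i p := by
      simp only [L, hC, Matrix.smul_apply, smul_eq_mul, mul_sum, mul_left_comm]
    have hg0 : g 0 = 0 := by simp [hg, colNorm]
    rw [hf₁0, hL, hg0]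
    simp only [hf₁, Q, sum_sq_sub_mul_apply]
    ring
  calc (∀ W, f₁ 0 + lam * g 0 ≤ f₁ W + lam * g W) ↔ ∀ W, L W ≤ Q W + lam * g W :=
        forall_congr' fun W => by rw [← sub_nonneg, hexcess W, sub_nonneg]
    _ ↔ ∀ W, L W ≤ lam * g W := by
        refine forall_le_add_iff_of_homogeneous (fun ε W _ => ?_) (fun ε W hε => ?_)
          (fun ε W => ?_) (fun W => ?_)
        · simp [L, mul_sum, mul_assoc]
        · simp only [hg, colNorm_smul hε.le, mul_sum, mul_left_comm]
        · simp only [Q, sum_sq_smul_mul_apply]; ring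
        · positivity
    _ ↔ ∀ p, colNorm C p ≤ lam := by rw [hg]; exact forall_sum_mul_le_iff_colNorm_le hlam.le
    _ ↔ _ := by rw [ge_iff_le, sup'_le_iff]; simp [colNorm]

open Matrix Finset in
/-- The zero matrix minimizes the group-lasso objective
`F(W) = (1/(2T))‖Θ − WΘ‖_F² + λ Σ_p ‖w_p‖₂` iff `λ ≥ max_p ‖c_p‖₂`,
where `c_p` is the `p`-th column of `C = (1/T)ΘΘᵀ`. -/
theorem groupLasso_zero_minimizer_iff
    (P T : ℕ) (hP : 0 < P) (hT : 0 < T)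
    (Θ : Matrix (Fin P) (Fin T) ℝ) (lam : ℝ) (hlam : 0 < lam)
    (C : Matrix (Fin P) (Fin P) ℝ)
    (hC : C = (1 / (T : ℝ)) • (Θ * Θᵀ))
    (f₁ : Matrix (Fin P) (Fin P) ℝ → ℝ)
    (hf₁ : f₁ = fun W => (1 / (2 * (T : ℝ))) *
      ∑ i : Fin P, ∑ t : Fin T, ((Θ - W * Θ) i t) ^ 2)
    (g : Matrix (Fin P) (Fin P) ℝ → ℝ)
    (hg : g = fun W => ∑ p : Fin P, Real.sqrt (∑ i : Fin P, (W i p) ^ 2)) :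
    (∀ W : Matrix (Fin P) (Fin P) ℝ,
        f₁ 0 + lam * g 0 ≤ f₁ W + lam * g W) ↔
      lam ≥ (univ.sup' (univ_nonempty_iff.mpr ⟨⟨0, hP⟩⟩)
        fun p : Fin P => Real.sqrt (∑ i : Fin P, (C i p) ^ 2)) :=
  groupLasso_zero_minimizer_iff_general P T hP Θ lam hlam C hC f₁ hf₁ g hg
end

section
/- The proximal operator of β‖·‖₂ on ℝ^P is given by prox(x; β) = (1 − β/‖x‖₂)·x if ‖x‖₂ ≥ β, and 0 otherwise. That is, for β > 0, this vector is the unique minimizer over w ∈ ℝ^P of β‖w‖₂ + (1/2)‖w − x‖₂². -/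
/-!
With `p` the proposed minimizer, `x - p` is a subgradient of `β‖·‖` at `p`: when `‖x‖ < β`
this is Cauchy–Schwarz at `p = 0`, and otherwise `x - p = (β/‖x‖) • x` is `β` times the unit
vector in the direction of `p`. The subgradient inequality combined with the expansion of
`‖w - x‖²` around `p` gives `F p + ½‖w - p‖² ≤ F w` for the objective `F`, which yields both
minimality and uniqueness.
-/

open RealInnerProductSpace

section InnerProductSpace

variable {E : Type*} [NormedAddCommGroup E] [InnerProductSpace ℝ E]

noncomputable def blockSoftThreshold (β : ℝ) (x : E) : E :=
  if β ≤ ‖x‖ then ((‖x‖ - β) / ‖x‖) • x else 0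

theorem subgradient_ineq_blockSoftThreshold {β : ℝ} (hβ : 0 < β) (x w : E) :
    β * ‖blockSoftThreshold β x‖ + ⟪x - blockSoftThreshold β x, w - blockSoftThreshold β x⟫
      ≤ β * ‖w‖ := by
  have hCS : ⟪x, w⟫ ≤ ‖x‖ * ‖w‖ := real_inner_le_norm x w
  unfold blockSoftThreshold
  split_ifs with hx
  · have hx₀ : 0 < ‖x‖ := hβ.trans_le hx
    set c := (‖x‖ - β) / ‖x‖ with hc_def
    have hc : 0 ≤ c := div_nonneg (sub_nonneg.mpr hx) hx₀.le
    have hsub : x - c • x = (β / ‖x‖) • x := by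
      rw [show β / ‖x‖ = 1 - c by rw [hc_def]; field_simp; ring, sub_smul, one_smul]
    calc β * ‖c • x‖ + ⟪x - c • x, w - c • x⟫
        = β * (c * ‖x‖) + β / ‖x‖ * (⟪x, w⟫ - c * ‖x‖ ^ 2) := by
          rw [norm_smul, Real.norm_of_nonneg hc, hsub, real_inner_smul_left, inner_sub_right,
            real_inner_smul_right, real_inner_self_eq_norm_sq]
      _ = β / ‖x‖ * ⟪x, w⟫ := by field_simp; ring
      _ ≤ β / ‖x‖ * (‖x‖ * ‖w‖) := by gcongr
      _ = β * ‖w‖ := by field_simp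
  · simp only [norm_zero, mul_zero, sub_zero, zero_add]
    nlinarith [norm_nonneg w]

theorem objective_add_le_of_subgradient_ineq {β : ℝ} {x p w : E}
    (hsub : β * ‖p‖ + ⟪x - p, w - p⟫ ≤ β * ‖w‖) :
    β * ‖p‖ + 1 / 2 * ‖p - x‖ ^ 2 + 1 / 2 * ‖w - p‖ ^ 2 ≤ β * ‖w‖ + 1 / 2 * ‖w - x‖ ^ 2 := by
  have hexpand : ‖w - x‖ ^ 2 = ‖w - p‖ ^ 2 - 2 * ⟪x - p, w - p⟫ + ‖p - x‖ ^ 2 := by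
    rw [← sub_add_sub_cancel w p x, norm_add_sq_real, real_inner_comm, ← neg_sub x p,
      inner_neg_left]
    ring
  linarith

theorem blockSoftThreshold_unique_minimizer {β : ℝ} (hβ : 0 < β) (x : E) :
    (∀ w : E, β * ‖blockSoftThreshold β x‖ + 1 / 2 * ‖blockSoftThreshold β x - x‖ ^ 2
        ≤ β * ‖w‖ + 1 / 2 * ‖w - x‖ ^ 2) ∧
      ∀ w : E, β * ‖w‖ + 1 / 2 * ‖w - x‖ ^ 2
          = β * ‖blockSoftThreshold β x‖ + 1 / 2 * ‖blockSoftThreshold β x - x‖ ^ 2 →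
        w = blockSoftThreshold β x := by
  have key := fun w : E =>
    objective_add_le_of_subgradient_ineq (subgradient_ineq_blockSoftThreshold hβ x w)
  refine ⟨fun w => ?_, fun w hw => ?_⟩
  · nlinarith [key w, sq_nonneg ‖w - blockSoftThreshold β x‖]
  · have : ‖w - blockSoftThreshold β x‖ ^ 2 = 0 := by
      nlinarith [key w, sq_nonneg ‖w - blockSoftThreshold β x‖]
    rwa [sq_eq_zero_iff, norm_sub_eq_zero_iff] at this

end InnerProductSpace

theorem EuclideanSpace.norm_toLp_eq_sqrt {ι : Type*} [Fintype ι] (v : ι → ℝ) :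
    ‖WithLp.toLp 2 v‖ = Real.sqrt (∑ i, v i ^ 2) := by
  rw [← EuclideanSpace.real_norm_sq_eq, Real.sqrt_sq (norm_nonneg _)]

/-- The proximal operator of `β‖·‖₂` on `ℝ^P`: for `β > 0`, the vector
`prox(x;β) = ((‖x‖₂ − β)/‖x‖₂)·x` if `‖x‖₂ ≥ β`, else `0`, is the unique
minimizer of `w ↦ β‖w‖₂ + (1/2)‖w − x‖₂²`. -/
theorem prox_euclidean_norm
    (P : ℕ) (x : Fin P → ℝ) (β : ℝ) (hβ : 0 < β)
    (enorm : (Fin P → ℝ) → ℝ)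
    (henorm : enorm = fun v => Real.sqrt (∑ i, (v i) ^ 2))
    (obj : (Fin P → ℝ) → ℝ)
    (hobj : obj = fun w => β * enorm w + (1 / 2) * ∑ i, (w i - x i) ^ 2)
    (p : Fin P → ℝ)
    (hp : p = if β ≤ enorm x then ((enorm x - β) / enorm x) • x else 0) :
    (∀ w, obj p ≤ obj w) ∧ (∀ w, obj w = obj p → w = p) := by
  have hnorm : ∀ v, enorm v = ‖WithLp.toLp 2 v‖ := fun v => by
    rw [henorm, EuclideanSpace.norm_toLp_eq_sqrt]
  have hobj' : ∀ w, obj w =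
      β * ‖WithLp.toLp 2 w‖ + 1 / 2 * ‖WithLp.toLp 2 w - WithLp.toLp 2 x‖ ^ 2 := fun w => by
    rw [hobj, ← WithLp.toLp_sub, EuclideanSpace.real_norm_sq_eq, ← hnorm]
    rfl
  have hp' : WithLp.toLp 2 p = blockSoftThreshold β (WithLp.toLp 2 x) := by
    rw [hp, blockSoftThreshold, ← hnorm]
    split_ifs <;> rfl
  obtain ⟨hmin, huniq⟩ := blockSoftThreshold_unique_minimizer hβ (WithLp.toLp 2 x)
  simp only [hobj', hp']
  exact ⟨fun w => hmin _, fun w hw => WithLp.toLp_injective 2 ((huniq _ hw).trans hp'.symm)⟩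
end
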